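/- arXiv:1711.03751 — 5 statements merged into one kernel-verified Lean document; each statement's English description precedes it below -/
import Mathlib

section
/- Let (W,h) be a finite-dimensional real inner product space, let J be a linear isometry of W with J∘J = −id, and let L be a skew-adjoint endomorphism of W (with respect to h) satisfying L∘J = J∘L. Then there exist a natural number m with dim W = 2m, orthonormal vectors e_1,…,e_m in W such that (e_1,…,e_m, Je_1,…,Je_m) is an orthonormal basis of W, and real numbers l_1,…,l_m such that L e_j = l_j · (J e_j) and L(J e_j) = −l_j · e_j for all j = 1,…,m. -/
open scoped RealInnerProductSpace

open Module Submodule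

/-!
The operator `A = -J ∘ L` is symmetric and commutes with `J`, and `L e = l • J e` exactly when
`A e = l • e`. If `v` is a unit eigenvector of `A`, then so is `J v`, for the same eigenvalue,
and it is orthogonal to `v`. The span of an orthonormal family `(e, J e)` of eigenvectors is
invariant under `J` and `A`, hence so is its orthogonal complement, where a further unit
eigenvector of `A` can be found; so a maximal such family spans `W`.
-/

section

variable {W : Type*} [NormedAddCommGroup W] [InnerProductSpace ℝ W]

theorem inner_map_map_of_skew {J : W →ₗ[ℝ] W} (hJ : ∀ x y, ⟪J x, y⟫ = -⟪x, J y⟫)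
    (hJ2 : ∀ x, J (J x) = -x) (x y : W) : ⟪J x, J y⟫ = ⟪x, y⟫ := by
  rw [hJ, hJ2, inner_neg_right, neg_neg]

theorem inner_self_map_eq_zero_of_skew {J : W →ₗ[ℝ] W} (hJ : ∀ x y, ⟪J x, y⟫ = -⟪x, J y⟫)
    (x : W) : ⟪x, J x⟫ = 0 := by
  have := hJ x x
  rw [real_inner_comm] at this
  linarith

theorem orthonormal_sumElim_map_iff {J : W →ₗ[ℝ] W} (hJ : ∀ x y, ⟪J x, y⟫ = -⟪x, J y⟫)
    (hJ2 : ∀ x, J (J x) = -x) {ι : Type*} {e : ι → W} :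
    Orthonormal ℝ (Sum.elim e fun i => J (e i)) ↔ Orthonormal ℝ e ∧ ∀ i j, ⟪e i, J (e j)⟫ = 0 := by
  classical
  simp only [orthonormal_iff_ite, Sum.forall, Sum.elim_inl, Sum.elim_inr, Sum.inl.injEq,
    Sum.inr.injEq, reduceCtorEq, if_false, inner_map_map_of_skew hJ hJ2, hJ, neg_eq_zero,
    forall_and]
  tauto

theorem Submodule.orthogonal_invariant {T S : W →ₗ[ℝ] W} (hTS : ∀ x y, ⟪T x, y⟫ = ⟪x, S y⟫)
    {U : Submodule ℝ W} (hS : ∀ u ∈ U, S u ∈ U) : ∀ x ∈ Uᗮ, T x ∈ Uᗮ := by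
  intro x hx u hu
  rw [real_inner_comm, hTS, real_inner_comm]
  exact hx _ (hS u hu)

theorem LinearMap.IsSymmetric.exists_norm_eq_one_apply_eq_smul [FiniteDimensional ℝ W]
    {A : W →ₗ[ℝ] W} (hA : A.IsSymmetric) {U : Submodule ℝ W} (hU : U ≠ ⊥)
    (hAU : ∀ u ∈ U, A u ∈ U) : ∃ v ∈ U, ‖v‖ = 1 ∧ ∃ μ : ℝ, A v = μ • v := by
  have : Nontrivial U := Submodule.nontrivial_iff_ne_bot.mpr hU
  obtain ⟨μ, hμ⟩ : ∃ μ : ℝ, End.HasEigenvalue (A.restrict hAU) μ :=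
    ⟨_, (hA.restrict_invariant hAU).hasEigenvalue_iSup_of_finiteDimensional⟩
  obtain ⟨v, hv⟩ := hμ.exists_hasEigenvector
  have hv0 : (v : W) ≠ 0 := by simpa using hv.2
  refine ⟨‖(v : W)‖⁻¹ • (v : W), U.smul_mem _ v.2, norm_smul_inv_norm hv0, μ, ?_⟩
  rw [map_smul, smul_comm]
  exact congrArg (‖(v : W)‖⁻¹ • ·) (congrArg Subtype.val hv.apply_eq_smul)

def IsUnitaryEigenframe (J A : W →ₗ[ℝ] W) {ι : Type*} (e : ι → W) : Prop :=
  Orthonormal ℝ (Sum.elim e fun i => J (e i)) ∧ ∀ i, ∃ μ : ℝ, A (e i) = μ • e i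

variable [FiniteDimensional ℝ W] {J A : W →ₗ[ℝ] W}

theorem IsUnitaryEigenframe.exists_cons (hJ : ∀ x y, ⟪J x, y⟫ = -⟪x, J y⟫)
    (hJ2 : ∀ x, J (J x) = -x) (hA : A.IsSymmetric) (hAJ : ∀ x, A (J x) = J (A x))
    {k : ℕ} {e : Fin k → W} (he : IsUnitaryEigenframe J A e)
    (hspan : span ℝ (Set.range (Sum.elim e fun i => J (e i))) ≠ ⊤) :
    ∃ v, IsUnitaryEigenframe J A (Fin.cons v e : Fin (k + 1) → W) := by
  set U := span ℝ (Set.range (Sum.elim e fun i => J (e i)))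
  have he_mem (i : Fin k) : e i ∈ U := subset_span ⟨.inl i, rfl⟩
  have hJe_mem (i : Fin k) : J (e i) ∈ U := subset_span ⟨.inr i, rfl⟩
  have invariant_of_generators (T : W →ₗ[ℝ] W) (hT : ∀ i, T (e i) ∈ U ∧ T (J (e i)) ∈ U) :
      ∀ u ∈ U, T u ∈ U := by
    refine fun u hu => (span_le (p := U.comap T)).2 ?_ hu
    rintro _ ⟨i | i, rfl⟩
    exacts [(hT i).1, (hT i).2]
  have hJU := invariant_of_generators J fun i => ⟨hJe_mem i, by rw [hJ2]; exact neg_mem (he_mem i)⟩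
  have hAU := invariant_of_generators A fun i => by
    obtain ⟨μ, hμ⟩ := he.2 i
    exact ⟨hμ ▸ smul_mem _ _ (he_mem i), by rw [hAJ, hμ, map_smul]; exact smul_mem _ _ (hJe_mem i)⟩
  have hJUperp : ∀ x ∈ Uᗮ, J x ∈ Uᗮ :=
    orthogonal_invariant (S := -J) (fun x y => by simp [hJ]) fun u hu => neg_mem (hJU u hu)
  have hAUperp : ∀ x ∈ Uᗮ, A x ∈ Uᗮ := orthogonal_invariant hA hAU
  obtain ⟨v, hvU, hv1, μ, hAv⟩ := hA.exists_norm_eq_one_apply_eq_smul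
    (fun h => hspan (orthogonal_eq_bot_iff.1 h)) hAUperp
  refine ⟨v, ?_, Fin.forall_fin_succ.2 ⟨⟨μ, hAv⟩, he.2⟩⟩
  have ⟨he_on, he_cross⟩ := (orthonormal_sumElim_map_iff hJ hJ2).1 he.1
  refine (orthonormal_sumElim_map_iff hJ hJ2).2 ⟨?_, ?_⟩
  · exact orthonormal_vecCons_iff.2
      ⟨hv1, fun i => inner_left_of_mem_orthogonal (he_mem i) hvU, he_on⟩
  · simp only [Fin.forall_fin_succ, Fin.cons_zero, Fin.cons_succ]
    exact ⟨⟨inner_self_map_eq_zero_of_skew hJ v,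
      fun j => inner_left_of_mem_orthogonal (hJe_mem j) hvU⟩,
      fun i => ⟨inner_right_of_mem_orthogonal (he_mem i) (hJUperp v hvU), he_cross i⟩⟩

theorem exists_isUnitaryEigenframe_span_eq_top (hJ : ∀ x y, ⟪J x, y⟫ = -⟪x, J y⟫)
    (hJ2 : ∀ x, J (J x) = -x) (hA : A.IsSymmetric) (hAJ : ∀ x, A (J x) = J (A x)) :
    ∃ (m : ℕ) (e : Fin m → W), IsUnitaryEigenframe J A e ∧
      span ℝ (Set.range (Sum.elim e fun i => J (e i))) = ⊤ := by
  classical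
  let P (k : ℕ) := ∃ e : Fin k → W, IsUnitaryEigenframe J A e
  have hP_le (k : ℕ) : P k → k ≤ finrank ℝ W := fun ⟨e, he⟩ => by
    simpa using ((orthonormal_sumElim_map_iff hJ hJ2).1 he.1).1.linearIndependent
      |>.fintype_card_le_finrank
  obtain ⟨e, he⟩ : P (Nat.findGreatest P (finrank ℝ W)) :=
    Nat.findGreatest_spec (Nat.zero_le _) ⟨Fin.elim0, by simp [IsUnitaryEigenframe]⟩
  refine ⟨_, e, he, by_contra fun hspan => ?_⟩
  obtain ⟨v, hv⟩ := IsUnitaryEigenframe.exists_cons hJ hJ2 hA hAJ he hspan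
  exact Nat.findGreatest_is_greatest (Nat.lt_succ_self _) (hP_le _ ⟨_, hv⟩) ⟨_, hv⟩

end

/-- if `J` is an orthogonal complex structure on a finite-dimensional real inner
product space `(W, h)` and `L` is a skew-adjoint endomorphism commuting with `J`, then there are
`m` with `dim W = 2m`, vectors `e₁, …, e_m` such that `(e₁,…,e_m, Je₁,…,Je_m)` is an orthonormal
basis of `W`, and reals `l₁,…,l_m` with `L e_j = l_j · (J e_j)` and `L (J e_j) = -l_j · e_j`. -/
theorem stmt2 {W : Type*} [NormedAddCommGroup W] [InnerProductSpace ℝ W]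
    [FiniteDimensional ℝ W] (J L : W →ₗ[ℝ] W)
    (hJiso : ∀ x y : W, ⟪J x, J y⟫ = ⟪x, y⟫)
    (hJ2 : ∀ x : W, J (J x) = -x)
    (hL : ∀ x y : W, ⟪L x, y⟫ = -⟪x, L y⟫)
    (hLJ : ∀ x : W, L (J x) = J (L x)) :
    ∃ (m : ℕ) (e : Fin m → W) (l : Fin m → ℝ),
      Module.finrank ℝ W = 2 * m ∧
      Orthonormal ℝ (Sum.elim e (fun j => J (e j))) ∧
      Submodule.span ℝ (Set.range (Sum.elim e (fun j => J (e j)))) = ⊤ ∧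
      ∀ j : Fin m, L (e j) = l j • J (e j) ∧ L (J (e j)) = -(l j) • e j := by
  have hJ (x y : W) : ⟪J x, y⟫ = -⟪x, J y⟫ := by
    rw [← hJiso x (J y), hJ2, inner_neg_right, neg_neg]
  set A : W →ₗ[ℝ] W := -(J ∘ₗ L)
  have hA : A.IsSymmetric := fun x y => by simp [A, hJ, hL, hLJ]
  have hAJ (x : W) : A (J x) = J (A x) := by simp [A, hLJ]
  obtain ⟨m, e, ⟨hon, heig⟩, hspan⟩ := exists_isUnitaryEigenframe_span_eq_top hJ hJ2 hA hAJ
  choose l hl using heig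
  have hLe (j : Fin m) : L (e j) = l j • J (e j) := by
    rw [← map_smul, ← hl j]
    simp [A, hJ2]
  refine ⟨m, e, l, ?_, hon, hspan, fun j => ⟨hLe j, ?_⟩⟩
  · have := finrank_span_eq_card hon.linearIndependent
    rw [hspan, finrank_top] at this
    simpa [two_mul] using this
  · rw [hLJ, hLe, map_smul, hJ2, smul_neg, neg_smul]
end

section
/- Let (V,h) be a 6-dimensional real inner product space, let J be a linear isometry of V with J∘J = −id, define ω(x,y) = h(Jx,y), and let A be an endomorphism of V with ω(Ax,y) + ω(x,Ay) = 0 for all x,y, which is normal with respect to h (A∘A* = A*∘A, where A* is the h-adjoint). Let S = (1/2)(A + A*) and L = (1/2)(A − A*). Then S∘L = L∘S, there exist orthonormal vectors e_1, e_2, e_3 in V such that (e_1, e_2, e_3, Je_1, Je_2, Je_3) is an orthonormal basis of V, and there exist real numbers s_1, s_2, s_3 such that S e_i = s_i · e_i and S(J e_i) = −s_i · (J e_i) for i = 1, 2, 3; moreover L preserves every eigenspace of S, i.e. L(ker(S − s·id)) ⊆ ker(S − s·id) for every real s. -/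
/-! The symplectic condition on `A` says `A* = J A J`, so `S = (A + A*)/2` anticommutes with `J`,
while normality of `A` is exactly `S L = L S`, which makes `L` preserve the eigenspaces of `S`.
Because `S J = -J S`, for a unit eigenvector `e` of `S` the pair `e, J e` is orthonormal and
spans an `S`- and `J`-invariant plane; its orthogonal complement is again invariant under both,
so `e₁, e₂, e₃` are found one at a time. -/

open scoped RealInnerProductSpace

/-- The symmetric part of an endomorphism with respect to the inner product. -/
noncomputable def symmPart {V : Type*} [NormedAddCommGroup V] [InnerProductSpace ℝ V]
    [FiniteDimensional ℝ V] (A : V →ₗ[ℝ] V) : V →ₗ[ℝ] V :=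
  (2⁻¹ : ℝ) • (A + LinearMap.adjoint A)

/-- The skew-symmetric part of an endomorphism with respect to the inner product. -/
noncomputable def skewPart {V : Type*} [NormedAddCommGroup V] [InnerProductSpace ℝ V]
    [FiniteDimensional ℝ V] (A : V →ₗ[ℝ] V) : V →ₗ[ℝ] V :=
  (2⁻¹ : ℝ) • (A - LinearMap.adjoint A)

section SymmSkew

variable {V : Type*} [NormedAddCommGroup V] [InnerProductSpace ℝ V] [FiniteDimensional ℝ V]

theorem isSymmetric_symmPart (A : V →ₗ[ℝ] V) : (symmPart A).IsSymmetric := by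
  intro x y
  simp only [symmPart, LinearMap.smul_apply, LinearMap.add_apply, real_inner_smul_left,
    real_inner_smul_right, inner_add_left, inner_add_right, LinearMap.adjoint_inner_left,
    LinearMap.adjoint_inner_right]
  ring

theorem symmPart_comp_skewPart_comm {A : V →ₗ[ℝ] V}
    (hA : A ∘ₗ LinearMap.adjoint A = LinearMap.adjoint A ∘ₗ A) :
    symmPart A ∘ₗ skewPart A = skewPart A ∘ₗ symmPart A := by
  simp only [symmPart, skewPart, LinearMap.smul_comp, LinearMap.comp_smul, LinearMap.add_comp,
    LinearMap.sub_comp, LinearMap.comp_add, LinearMap.comp_sub, hA]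
  module

end SymmSkew

theorem LinearMap.IsSymmetric.exists_eigenvector_mem_of_ne_bot {𝕜 E : Type*} [RCLike 𝕜]
    [NormedAddCommGroup E] [InnerProductSpace 𝕜 E] [FiniteDimensional 𝕜 E] {T : E →ₗ[𝕜] E}
    (hT : T.IsSymmetric) {K : Submodule 𝕜 E} (hK : K ∈ Module.End.invtSubmodule T)
    (hK0 : K ≠ ⊥) : ∃ v ∈ K, ‖v‖ = 1 ∧ ∃ μ : 𝕜, T v = μ • v := by
  have : Nontrivial K := Submodule.nontrivial_iff_ne_bot.mpr hK0
  have hT' := hT.restrict_invariant hK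
  let i : Fin (Module.finrank 𝕜 K) := ⟨0, Module.finrank_pos⟩
  refine ⟨hT'.eigenvectorBasis rfl i, (hT'.eigenvectorBasis rfl i).2, ?_, _,
    congrArg Subtype.val (hT'.apply_eigenvectorBasis rfl i)⟩
  exact (hT'.eigenvectorBasis rfl).orthonormal.norm_eq_one i

structure IsOrthogonalComplexStructure {V : Type*} [NormedAddCommGroup V]
    [InnerProductSpace ℝ V] (J : V →ₗ[ℝ] V) : Prop where
  inner_map_map : ∀ x y, ⟪J x, J y⟫ = ⟪x, y⟫
  map_map : ∀ x, J (J x) = -x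

namespace IsOrthogonalComplexStructure

variable {V : Type*} [NormedAddCommGroup V] [InnerProductSpace ℝ V] {J : V →ₗ[ℝ] V}

theorem inner_map_left (hJ : IsOrthogonalComplexStructure J) (x y : V) :
    ⟪J x, y⟫ = -⟪x, J y⟫ := by
  rw [← hJ.inner_map_map x (J y), hJ.map_map, inner_neg_right, neg_neg]

theorem inner_self_map (hJ : IsOrthogonalComplexStructure J) (x : V) : ⟪x, J x⟫ = 0 := by
  have h := hJ.inner_map_left x x
  rw [real_inner_comm] at h
  linarith

theorem orthogonal_mem_invtSubmodule (hJ : IsOrthogonalComplexStructure J)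
    {W : Submodule ℝ V} (hW : W ∈ Module.End.invtSubmodule J) :
    Wᗮ ∈ Module.End.invtSubmodule J := fun x hx y hy ↦ by
  rw [← neg_eq_zero, ← hJ.inner_map_left]
  exact hx (J y) (hW hy)

theorem orthonormal_sumElim_iff (hJ : IsOrthogonalComplexStructure J) {ι : Type*} {e : ι → V} :
    Orthonormal ℝ (Sum.elim e fun i ↦ J (e i)) ↔ Orthonormal ℝ e ∧ ∀ i j, ⟪e i, J (e j)⟫ = 0 := by
  classical
  simp only [orthonormal_iff_ite, Sum.forall, Sum.elim_inl, Sum.elim_inr, Sum.inl.injEq,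
    Sum.inr.injEq, reduceCtorEq, if_false, hJ.inner_map_map, hJ.inner_map_left, neg_eq_zero,
    forall_and]
  tauto

variable [FiniteDimensional ℝ V]

theorem adjoint_eq_comp_of_inner_map_add_inner_map_eq_zero (hJ : IsOrthogonalComplexStructure J)
    {A : V →ₗ[ℝ] V} (hA : ∀ x y, ⟪J (A x), y⟫ + ⟪J x, A y⟫ = 0) :
    LinearMap.adjoint A = J ∘ₗ A ∘ₗ J := by
  refine ((LinearMap.eq_adjoint_iff _ _).mpr fun x y ↦ ?_).symm
  have h := hA (J x) y
  rw [hJ.map_map, inner_neg_left] at h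
  rw [LinearMap.comp_apply, LinearMap.comp_apply]
  linarith

theorem symmPart_map_eq_neg (hJ : IsOrthogonalComplexStructure J)
    {A : V →ₗ[ℝ] V} (hA : ∀ x y, ⟪J (A x), y⟫ + ⟪J x, A y⟫ = 0) (x : V) :
    symmPart A (J x) = -J (symmPart A x) := by
  simp only [symmPart, hJ.adjoint_eq_comp_of_inner_map_add_inner_map_eq_zero hA,
    LinearMap.smul_apply, LinearMap.add_apply, LinearMap.comp_apply, hJ.map_map, map_add,
    map_neg, map_smul]
  module

theorem exists_orthonormal_eigenvectors (hJ : IsOrthogonalComplexStructure J)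
    {S : V →ₗ[ℝ] V} (hS : S.IsSymmetric) (hSJ : ∀ x, S (J x) = -J (S x)) {n : ℕ}
    (hn : 2 * n ≤ Module.finrank ℝ V) : ∃ (e : Fin n → V) (s : Fin n → ℝ),
      Orthonormal ℝ (Sum.elim e fun i ↦ J (e i)) ∧ ∀ i, S (e i) = s i • e i := by
  induction n with
  | zero => exact ⟨Fin.elim0, Fin.elim0, .of_isEmpty _, fun i ↦ i.elim0⟩
  | succ n ih =>
    obtain ⟨e, s, he, hSe⟩ := ih (by omega)
    set W := Submodule.span ℝ (Set.range (Sum.elim e fun i ↦ J (e i)))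
    have hgen : ∀ k, Sum.elim e (fun i ↦ J (e i)) k ∈ W := fun k ↦ Submodule.subset_span ⟨k, rfl⟩
    have hW : W ≠ ⊤ := by
      intro h
      have hWdim : Module.finrank ℝ W = 2 * n := by
        simpa [two_mul] using finrank_span_eq_card he.linearIndependent
      rw [h, finrank_top] at hWdim
      omega
    have hWS : W ∈ Module.End.invtSubmodule S := by
      rw [Module.End.mem_invtSubmodule, Submodule.span_le]
      rintro _ ⟨i | i, rfl⟩
      · simpa [hSe] using W.smul_mem (s i) (hgen (.inl i))
      · simpa [hSJ, hSe] using W.smul_mem (-s i) (hgen (.inr i))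
    have hWJ : W ∈ Module.End.invtSubmodule J := by
      rw [Module.End.mem_invtSubmodule, Submodule.span_le]
      rintro _ ⟨i | i, rfl⟩
      · exact hgen (.inr i)
      · simpa [hJ.map_map] using W.neg_mem (hgen (.inl i))
    obtain ⟨v, hvW, hv, μ, hSv⟩ := hS.exists_eigenvector_mem_of_ne_bot
      (hS.orthogonalComplement_mem_invtSubmodule hWS) (by rwa [Ne, Submodule.orthogonal_eq_bot_iff])
    have hJvW : J v ∈ Wᗮ := hJ.orthogonal_mem_invtSubmodule hWJ hvW
    rw [hJ.orthonormal_sumElim_iff] at he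
    refine ⟨Matrix.vecCons v e, Matrix.vecCons μ s, ?_, Fin.cases hSv hSe⟩
    rw [hJ.orthonormal_sumElim_iff, orthonormal_vecCons_iff]
    refine ⟨⟨hv, fun i ↦ W.inner_left_of_mem_orthogonal (hgen (.inl i)) hvW, he.1⟩,
      Fin.cases (Fin.cases (hJ.inner_self_map v) fun j ↦ ?_) fun i ↦ Fin.cases ?_ (he.2 i)⟩
    · exact W.inner_left_of_mem_orthogonal (hgen (.inr j)) hvW
    · exact W.inner_right_of_mem_orthogonal (hgen (.inl i)) hJvW

end IsOrthogonalComplexStructure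

/-- on a 6-dimensional real inner product space with orthogonal complex
structure `J`, if `A ∈ sp(ω)` (with `ω(x,y) = h(Jx,y)`) is normal, then its symmetric part `S`
and skew part `L` commute, `S` diagonalises as `S eᵢ = sᵢ eᵢ`, `S (J eᵢ) = -sᵢ (J eᵢ)` in a
suitable orthonormal basis `(e₁,e₂,e₃,Je₁,Je₂,Je₃)`, and `L` preserves every eigenspace of `S`. -/
theorem stmt3 {V : Type*} [NormedAddCommGroup V] [InnerProductSpace ℝ V]
    [FiniteDimensional ℝ V] (hdim : Module.finrank ℝ V = 6)
    (J A : V →ₗ[ℝ] V)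
    (hJiso : ∀ x y : V, ⟪J x, J y⟫ = ⟪x, y⟫)
    (hJ2 : ∀ x : V, J (J x) = -x)
    (hA : ∀ x y : V, ⟪J (A x), y⟫ + ⟪J x, A y⟫ = 0)
    (hnormal : A ∘ₗ LinearMap.adjoint A = LinearMap.adjoint A ∘ₗ A) :
    symmPart A ∘ₗ skewPart A = skewPart A ∘ₗ symmPart A ∧
    (∃ (e : Fin 3 → V) (s : Fin 3 → ℝ),
      Orthonormal ℝ (Sum.elim e (fun i => J (e i))) ∧
      Submodule.span ℝ (Set.range (Sum.elim e (fun i => J (e i)))) = ⊤ ∧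
      ∀ i : Fin 3, symmPart A (e i) = s i • e i ∧
        symmPart A (J (e i)) = -(s i) • J (e i)) ∧
    ∀ c : ℝ, Submodule.map (skewPart A) (LinearMap.ker (symmPart A - c • LinearMap.id)) ≤
      LinearMap.ker (symmPart A - c • LinearMap.id) := by
  have hJ : IsOrthogonalComplexStructure J := ⟨hJiso, hJ2⟩
  have hSL := symmPart_comp_skewPart_comm hnormal
  refine ⟨hSL, ?_, fun c ↦ ?_⟩
  · obtain ⟨e, s, he, hSe⟩ := hJ.exists_orthonormal_eigenvectors (isSymmetric_symmPart A)
      (hJ.symmPart_map_eq_neg hA) (n := 3) (by omega)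
    refine ⟨e, s, he, he.linearIndependent.span_eq_top_of_card_eq_finrank (by simp [hdim]),
      fun i ↦ ⟨hSe i, ?_⟩⟩
    rw [hJ.symmPart_map_eq_neg hA, hSe i, map_smul, neg_smul]
  · rw [← Module.End.one_eq_id, ← Module.End.eigenspace_def,
      ← Module.End.mem_invtSubmodule_iff_map_le]
    exact Module.End.mapsTo_genEigenspace_of_comm hSL c 1
end

section
/- On ℝ⁶ with standard basis (f_1,…,f_6), let A be the linear map with A f_1 = l_1 f_2, A f_2 = −l_1 f_1, A f_3 = l_2 f_4, A f_4 = −l_2 f_3, A f_5 = l_3 f_6, A f_6 = −l_3 f_5, for real numbers l_1, l_2, l_3. Let ψ₀ = f^{136} + f^{145} + f^{235} − f^{246}. Then θ(A)(θ(A)ψ₀) = −(l_1+l_2+l_3)²·ψ₀. -/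
/-- The derivation action `θ(A)` of an endomorphism `A` on (trilinear, alternating) 3-forms:
`(θ(A)α)(x,y,z) = -α(Ax,y,z) - α(x,Ay,z) - α(x,y,Az)`. -/
def theta (A : (Fin 6 → ℝ) →ₗ[ℝ] (Fin 6 → ℝ))
    (α : (Fin 6 → ℝ) → (Fin 6 → ℝ) → (Fin 6 → ℝ) → ℝ) :
    (Fin 6 → ℝ) → (Fin 6 → ℝ) → (Fin 6 → ℝ) → ℝ :=
  fun x y z => -α (A x) y z - α x (A y) z - α x y (A z)

/-- The alternating 3-form `f^i ∧ f^j ∧ f^k` on `ℝ⁶`: the determinant of the 3×3 matrix whose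
rows are the `i`-th, `j`-th and `k`-th coordinates of the three arguments. -/
def eform (i j k : Fin 6) : (Fin 6 → ℝ) → (Fin 6 → ℝ) → (Fin 6 → ℝ) → ℝ :=
  fun x y z => Matrix.det !![x i, x j, x k; y i, y j, y k; z i, z j, z k]

lemma eform_apply (i j k : Fin 6) (x y z : Fin 6 → ℝ) :
    eform i j k x y z = x i * (y j * z k - y k * z j) - x j * (y i * z k - y k * z i)
      + x k * (y i * z j - y j * z i) := by
  simp [eform, Matrix.det_fin_three]; ring

lemma cons_val_five {α : Type*} (a b c d e f : α) : ![a, b, c, d, e, f] 5 = f := rfl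

set_option maxHeartbeats 2000000 in
/-- for the skew map `A` with `A f₁ = l₁ f₂, A f₂ = -l₁ f₁, …` and
`ψ₀ = f^{136} + f^{145} + f^{235} - f^{246}`, one has `θ(A)(θ(A)ψ₀) = -(l₁+l₂+l₃)²·ψ₀`. -/
theorem stmt6 (l₁ l₂ l₃ : ℝ) (A : (Fin 6 → ℝ) →ₗ[ℝ] (Fin 6 → ℝ))
    (h1 : A (Pi.single 0 1) = l₁ • (Pi.single 1 1 : Fin 6 → ℝ))
    (h2 : A (Pi.single 1 1) = -l₁ • (Pi.single 0 1 : Fin 6 → ℝ))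
    (h3 : A (Pi.single 2 1) = l₂ • (Pi.single 3 1 : Fin 6 → ℝ))
    (h4 : A (Pi.single 3 1) = -l₂ • (Pi.single 2 1 : Fin 6 → ℝ))
    (h5 : A (Pi.single 4 1) = l₃ • (Pi.single 5 1 : Fin 6 → ℝ))
    (h6 : A (Pi.single 5 1) = -l₃ • (Pi.single 4 1 : Fin 6 → ℝ)) :
    theta A (theta A (eform 0 2 5 + eform 0 3 4 + eform 1 2 4 - eform 1 3 5)) =
      (-(l₁ + l₂ + l₃) ^ 2) • (eform 0 2 5 + eform 0 3 4 + eform 1 2 4 - eform 1 3 5) := by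
  have key : ∀ x : Fin 6 → ℝ, A x = ![-l₁ * x 1, l₁ * x 0, -l₂ * x 3, l₂ * x 2, -l₃ * x 5, l₃ * x 4] := by
    intro x
    have hx : x = x 0 • (Pi.single 0 1 : Fin 6 → ℝ) + x 1 • (Pi.single 1 1 : Fin 6 → ℝ)
        + x 2 • (Pi.single 2 1 : Fin 6 → ℝ) + x 3 • (Pi.single 3 1 : Fin 6 → ℝ)
        + x 4 • (Pi.single 4 1 : Fin 6 → ℝ) + x 5 • (Pi.single 5 1 : Fin 6 → ℝ) := by
      funext j; fin_cases j <;> simp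
    rw [hx]
    simp only [map_add, map_smul, h1, h2, h3, h4, h5, h6]
    funext j; fin_cases j <;> simp [cons_val_five] <;> ring
  funext x y z
  simp only [theta, key, Pi.add_apply, Pi.sub_apply, Pi.smul_apply, smul_eq_mul,
    eform_apply, Matrix.cons_val_zero, Matrix.cons_val_one, Matrix.cons_val_two,
    Matrix.cons_val_three, Matrix.cons_val_four, cons_val_five, Matrix.head_cons,
    Matrix.tail_cons, Matrix.head_fin_const]
  ring
end

section
/- On ℝ⁶ with standard basis (f_1,…,f_6), let A be the linear map with A f_1 = s_1 f_1, A f_2 = −s_1 f_2, A f_3 = s_2 f_3, A f_4 = −s_2 f_4, A f_5 = s_3 f_5, A f_6 = −s_3 f_6, for real numbers s_1, s_2, s_3 not all zero. Set δ = s_1² + s_2² + s_3², σ_1 = (s_1+s_2+s_3)², σ_2 = (s_1+s_2−s_3)², σ_3 = (s_1−s_2+s_3)², σ_4 = (−s_1+s_2+s_3)², and for t < 1/(8δ) set ε(t) = −ln(1 − 8δt)/(8δ). Define the curve of alternating 3-forms χ(t) = −e^{−σ_1 ε(t)}·f^{246} + e^{−σ_2 ε(t)}·f^{136} + e^{−σ_3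 ε(t)}·f^{145} + e^{−σ_4 ε(t)}·f^{235}. Then χ(0) = f^{136} + f^{145} + f^{235} − f^{246}, and for every t < 1/(8δ) the derivative of χ at t exists and equals −(1 − 8δt)^{−1}·θ(A)(θ(A)(χ(t))). In particular χ solves this ODE on the interval (−∞, 1/(8δ)), so the solution is ancient. -/
open Real

theorem apply_eq_mul_of_apply_single {ι R : Type*} [Fintype ι] [DecidableEq ι] [CommSemiring R]
    (A : (ι → R) →ₗ[R] (ι → R)) (a : ι → R)
    (hA : ∀ i, A (Pi.single i 1) = a i • Pi.single i 1) (v : ι → R) (i : ι) :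
    A v i = a i * v i := by
  have hdiag : A = Matrix.toLin' (Matrix.diagonal a) :=
    (Pi.basisFun R ι).ext fun j => by simp [hA, ← Pi.single_smul']
  simp [hdiag, Matrix.mulVec_diagonal]

theorem hasDerivAt_neg_log_one_sub_mul_div {c t : ℝ} (hc : c ≠ 0) (ht : 1 - c * t ≠ 0) :
    HasDerivAt (fun u => -log (1 - c * u) / c) (1 - c * t)⁻¹ t := by
  have hlin : HasDerivAt (fun u => 1 - c * u) (-c) t := by
    simpa using ((hasDerivAt_id t).const_mul c).const_sub 1
  refine ((hlin.log ht).neg.div_const c).congr_deriv ?_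
  field_simp

section Theta

variable (A : (Fin 6 → ℝ) →ₗ[ℝ] (Fin 6 → ℝ))

theorem theta_add (α β : (Fin 6 → ℝ) → (Fin 6 → ℝ) → (Fin 6 → ℝ) → ℝ) :
    theta A (α + β) = theta A α + theta A β := by
  funext x y z
  simp only [theta, Pi.add_apply]
  ring

theorem theta_smul (c : ℝ) (α : (Fin 6 → ℝ) → (Fin 6 → ℝ) → (Fin 6 → ℝ) → ℝ) :
    theta A (c • α) = c • theta A α := by
  funext x y z
  simp only [theta, Pi.smul_apply, smul_eq_mul]
  ring

variable {A} {a : Fin 6 → ℝ} (hA : ∀ v i, A v i = a i * v i)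
include hA

theorem theta_eform_of_diag (i j k : Fin 6) :
    theta A (eform i j k) = (-(a i + a j + a k)) • eform i j k := by
  funext x y z
  simp only [theta, eform, hA, Matrix.det_fin_three, Matrix.of_apply, Matrix.cons_val',
    Matrix.cons_val_zero, Matrix.cons_val_fin_one, Matrix.cons_val_one, Matrix.cons_val,
    Pi.smul_apply, smul_eq_mul]
  ring

theorem theta_theta_eform_of_diag (i j k : Fin 6) :
    theta A (theta A (eform i j k)) = (a i + a j + a k) ^ 2 • eform i j k := by
  rw [theta_eform_of_diag hA, theta_smul, theta_eform_of_diag hA, smul_smul,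
    neg_mul_neg, ← sq]

end Theta

/-- for `A = diag(s₁,-s₁,s₂,-s₂,s₃,-s₃)` with `(s₁,s₂,s₃) ≠ 0`,
`δ = s₁²+s₂²+s₃²`, `σ₁ = (s₁+s₂+s₃)²`, `σ₂ = (s₁+s₂-s₃)²`, `σ₃ = (s₁-s₂+s₃)²`,
`σ₄ = (-s₁+s₂+s₃)²`, `ε(t) = -ln(1-8δt)/(8δ)` and
`χ(t) = -e^{-σ₁ε(t)} f^{246} + e^{-σ₂ε(t)} f^{136} + e^{-σ₃ε(t)} f^{145} + e^{-σ₄ε(t)} f^{235}`,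
the curve `χ` satisfies `χ(0) = ψ₀ = f^{136} + f^{145} + f^{235} - f^{246}` and, for every
`t < 1/(8δ)`, its derivative exists and equals `-(1-8δt)⁻¹ · θ(A)(θ(A)(χ(t)))` (the derivative
being taken pointwise on the arguments of the 3-forms); so `χ` solves the ODE on the whole
interval `(-∞, 1/(8δ))`, i.e. the solution is ancient. -/
theorem stmt7 (s₁ s₂ s₃ : ℝ) (hs : ¬(s₁ = 0 ∧ s₂ = 0 ∧ s₃ = 0))
    (A : (Fin 6 → ℝ) →ₗ[ℝ] (Fin 6 → ℝ))
    (h1 : A (Pi.single 0 1) = s₁ • (Pi.single 0 1 : Fin 6 → ℝ))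
    (h2 : A (Pi.single 1 1) = -s₁ • (Pi.single 1 1 : Fin 6 → ℝ))
    (h3 : A (Pi.single 2 1) = s₂ • (Pi.single 2 1 : Fin 6 → ℝ))
    (h4 : A (Pi.single 3 1) = -s₂ • (Pi.single 3 1 : Fin 6 → ℝ))
    (h5 : A (Pi.single 4 1) = s₃ • (Pi.single 4 1 : Fin 6 → ℝ))
    (h6 : A (Pi.single 5 1) = -s₃ • (Pi.single 5 1 : Fin 6 → ℝ))
    (δ σ₁ σ₂ σ₃ σ₄ : ℝ)
    (hδ : δ = s₁ ^ 2 + s₂ ^ 2 + s₃ ^ 2)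
    (hσ₁ : σ₁ = (s₁ + s₂ + s₃) ^ 2) (hσ₂ : σ₂ = (s₁ + s₂ - s₃) ^ 2)
    (hσ₃ : σ₃ = (s₁ - s₂ + s₃) ^ 2) (hσ₄ : σ₄ = (-s₁ + s₂ + s₃) ^ 2)
    (ε : ℝ → ℝ) (hε : ∀ t, ε t = -Real.log (1 - 8 * δ * t) / (8 * δ))
    (χ : ℝ → (Fin 6 → ℝ) → (Fin 6 → ℝ) → (Fin 6 → ℝ) → ℝ)
    (hχ : ∀ t, χ t =
      (-Real.exp (-(σ₁ * ε t))) • eform 1 3 5 + Real.exp (-(σ₂ * ε t)) • eform 0 2 5 +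
        Real.exp (-(σ₃ * ε t)) • eform 0 3 4 + Real.exp (-(σ₄ * ε t)) • eform 1 2 4) :
    χ 0 = eform 0 2 5 + eform 0 3 4 + eform 1 2 4 - eform 1 3 5 ∧
    ∀ t : ℝ, t < 1 / (8 * δ) → ∀ x y z : Fin 6 → ℝ,
      HasDerivAt (fun u => χ u x y z)
        (-(1 - 8 * δ * t)⁻¹ * theta A (theta A (χ t)) x y z) t := by
  set a : Fin 6 → ℝ := ![s₁, -s₁, s₂, -s₂, s₃, -s₃]
  have hA : ∀ v i, A v i = a i * v i :=
    apply_eq_mul_of_apply_single A a fun i => by fin_cases i <;> assumption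
  have h8δ_pos : 0 < 8 * δ := by
    rw [hδ]
    contrapose! hs
    refine ⟨?_, ?_, ?_⟩ <;> nlinarith [sq_nonneg s₁, sq_nonneg s₂, sq_nonneg s₃]
  constructor
  · simp only [hχ, hε, mul_zero, sub_zero, log_one, neg_zero, zero_div, exp_zero, neg_smul,
      one_smul]
    abel
  intro t ht x y z
  have hε' : HasDerivAt ε (1 - 8 * δ * t)⁻¹ t := by
    have ht' : 8 * δ * t < 1 := by
      rw [lt_div_iff₀ h8δ_pos] at ht
      linarith
    rw [funext hε]
    exact hasDerivAt_neg_log_one_sub_mul_div h8δ_pos.ne' (by linarith)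
  have hcoeff (σ : ℝ) : HasDerivAt (fun u => exp (-(σ * ε u)))
      (exp (-(σ * ε t)) * -(σ * (1 - 8 * δ * t)⁻¹)) t :=
    ((hε'.const_mul σ).neg).exp
  simp only [hχ, theta_add, theta_smul, theta_theta_eform_of_diag hA, Pi.add_apply,
    Pi.smul_apply, smul_eq_mul]
  refine ((((hcoeff σ₁).neg.mul_const _).add ((hcoeff σ₂).mul_const _)).add
    ((hcoeff σ₃).mul_const _)).add ((hcoeff σ₄).mul_const _) |>.congr_deriv ?_
  rw [hσ₁, hσ₂, hσ₃, hσ₄]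
  simp only [a, Matrix.cons_val_zero, Matrix.cons_val_one, Matrix.cons_val]
  ring
end

section
/- On ℝ⁶ with standard basis (f_1,…,f_6), let A be the linear map with A f_1 = l_1 f_2, A f_2 = −l_1 f_1, A f_3 = l_2 f_4, A f_4 = −l_2 f_3, A f_5 = l_3 f_6, A f_6 = −l_3 f_5, for real numbers l_1, l_2, l_3, and set l = l_1 + l_2 + l_3 ≠ 0. Let ψ₀ = f^{136} + f^{145} + f^{235} − f^{246} and define, for t < 1/(2l²), the curve of alternating 3-forms p(t) = √(1 − 2l²t)·ψ₀. Then p(0) = ψ₀, and for every t < 1/(2l²) the derivative of p at t exists and equals (1 − 2l²t)^{−1}·θ(A)(θ(A)(p(t))). In particular p solves this ODE on the interval (−∞, 1/(2l²)), so the solution is ancient. -/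
set_option maxHeartbeats 2000000 in
/-- for the skew map `A` with `A f₁ = l₁ f₂, A f₂ = -l₁ f₁, …`,
`l = l₁+l₂+l₃ ≠ 0`, `ψ₀ = f^{136} + f^{145} + f^{235} - f^{246}` and
`p(t) = √(1-2l²t)·ψ₀` for `t < 1/(2l²)`, the curve `p` satisfies `p(0) = ψ₀` and, for every
`t < 1/(2l²)`, its derivative exists and equals `(1-2l²t)⁻¹ · θ(A)(θ(A)(p(t)))` (the derivative
being taken pointwise on the arguments of the 3-forms); so `p` solves the ODE on the whole
interval `(-∞, 1/(2l²))`, i.e. the solution is ancient. -/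
theorem stmt8 (l₁ l₂ l₃ : ℝ) (A : (Fin 6 → ℝ) →ₗ[ℝ] (Fin 6 → ℝ))
    (h1 : A (Pi.single 0 1) = l₁ • (Pi.single 1 1 : Fin 6 → ℝ))
    (h2 : A (Pi.single 1 1) = -l₁ • (Pi.single 0 1 : Fin 6 → ℝ))
    (h3 : A (Pi.single 2 1) = l₂ • (Pi.single 3 1 : Fin 6 → ℝ))
    (h4 : A (Pi.single 3 1) = -l₂ • (Pi.single 2 1 : Fin 6 → ℝ))
    (h5 : A (Pi.single 4 1) = l₃ • (Pi.single 5 1 : Fin 6 → ℝ))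
    (h6 : A (Pi.single 5 1) = -l₃ • (Pi.single 4 1 : Fin 6 → ℝ))
    (l : ℝ) (hl : l = l₁ + l₂ + l₃) (hl0 : l ≠ 0)
    (p : ℝ → (Fin 6 → ℝ) → (Fin 6 → ℝ) → (Fin 6 → ℝ) → ℝ)
    (hp : ∀ t, p t = Real.sqrt (1 - 2 * l ^ 2 * t) •
      (eform 0 2 5 + eform 0 3 4 + eform 1 2 4 - eform 1 3 5)) :
    p 0 = eform 0 2 5 + eform 0 3 4 + eform 1 2 4 - eform 1 3 5 ∧
    ∀ t : ℝ, t < 1 / (2 * l ^ 2) → ∀ x y z : Fin 6 → ℝ,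
      HasDerivAt (fun u => p u x y z)
        ((1 - 2 * l ^ 2 * t)⁻¹ * theta A (theta A (p t)) x y z) t := by
  have hv : ∀ v : Fin 6 → ℝ, v = v 0 • (Pi.single 0 1 : Fin 6 → ℝ) + v 1 • (Pi.single 1 1 : Fin 6 → ℝ)
      + v 2 • (Pi.single 2 1 : Fin 6 → ℝ) + v 3 • (Pi.single 3 1 : Fin 6 → ℝ)
      + v 4 • (Pi.single 4 1 : Fin 6 → ℝ) + v 5 • (Pi.single 5 1 : Fin 6 → ℝ) := by
    intro v; funext i; fin_cases i <;> simp
  have hA0 : ∀ v : Fin 6 → ℝ, A v 0 = -(l₁ * v 1) := by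
    intro v; conv_lhs => rw [hv v]
    simp [map_add, map_smul, h1, h2, h3, h4, h5, h6, Pi.single_apply]
    try ring
  have hA1 : ∀ v : Fin 6 → ℝ, A v 1 = l₁ * v 0 := by
    intro v; conv_lhs => rw [hv v]
    simp [map_add, map_smul, h1, h2, h3, h4, h5, h6, Pi.single_apply]
    try ring
  have hA2 : ∀ v : Fin 6 → ℝ, A v 2 = -(l₂ * v 3) := by
    intro v; conv_lhs => rw [hv v]
    simp [map_add, map_smul, h1, h2, h3, h4, h5, h6, Pi.single_apply]
    try ring
  have hA3 : ∀ v : Fin 6 → ℝ, A v 3 = l₂ * v 2 := by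
    intro v; conv_lhs => rw [hv v]
    simp [map_add, map_smul, h1, h2, h3, h4, h5, h6, Pi.single_apply]
    try ring
  have hA4 : ∀ v : Fin 6 → ℝ, A v 4 = -(l₃ * v 5) := by
    intro v; conv_lhs => rw [hv v]
    simp [map_add, map_smul, h1, h2, h3, h4, h5, h6, Pi.single_apply]
    try ring
  have hA5 : ∀ v : Fin 6 → ℝ, A v 5 = l₃ * v 4 := by
    intro v; conv_lhs => rw [hv v]
    simp [map_add, map_smul, h1, h2, h3, h4, h5, h6, Pi.single_apply]
    try ring
  set ψ : (Fin 6 → ℝ) → (Fin 6 → ℝ) → (Fin 6 → ℝ) → ℝ :=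
    eform 0 2 5 + eform 0 3 4 + eform 1 2 4 - eform 1 3 5 with hψ
  have hψval : ∀ a b c : Fin 6 → ℝ, ψ a b c =
      (a 0*(b 2*c 5) - a 0*(b 5*c 2) - a 2*(b 0*c 5) + a 2*(b 5*c 0) + a 5*(b 0*c 2) - a 5*(b 2*c 0))
      + (a 0*(b 3*c 4) - a 0*(b 4*c 3) - a 3*(b 0*c 4) + a 3*(b 4*c 0) + a 4*(b 0*c 3) - a 4*(b 3*c 0))
      + (a 1*(b 2*c 4) - a 1*(b 4*c 2) - a 2*(b 1*c 4) + a 2*(b 4*c 1) + a 4*(b 1*c 2) - a 4*(b 2*c 1))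
      - (a 1*(b 3*c 5) - a 1*(b 5*c 3) - a 3*(b 1*c 5) + a 3*(b 5*c 1) + a 5*(b 1*c 3) - a 5*(b 3*c 1)) := by
    intro a b c
    simp [hψ, eform, Pi.add_apply, Pi.sub_apply, Matrix.det_fin_three]
    ring
  have key : ∀ x y z : Fin 6 → ℝ,
      theta A (theta A ψ) x y z = -(l ^ 2) * ψ x y z := by
    intro x y z
    simp only [theta]
    simp only [hψval]
    simp only [hA0, hA1, hA2, hA3, hA4, hA5, hl]
    ring
  have hsmul : ∀ (s : ℝ) (x y z : Fin 6 → ℝ),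
      theta A (theta A (s • ψ)) x y z = s * theta A (theta A ψ) x y z := by
    intro s x y z
    simp only [theta, Pi.smul_apply, smul_eq_mul]
    ring
  constructor
  · rw [hp 0]; norm_num
  · intro t ht x y z
    have hl2 : (0:ℝ) < 2 * l ^ 2 := by positivity
    have hpos : 0 < 1 - 2 * l ^ 2 * t := by
      rw [lt_div_iff₀ hl2] at ht; nlinarith
    set s := Real.sqrt (1 - 2 * l ^ 2 * t) with hs
    have hs0 : 0 < s := Real.sqrt_pos.mpr hpos
    have hss : s * s = 1 - 2 * l ^ 2 * t := Real.mul_self_sqrt hpos.le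
    have hfun : ∀ u : ℝ, p u x y z = Real.sqrt (1 - 2 * l ^ 2 * u) * ψ x y z := by
      intro u; rw [hp u]; rfl
    have hd : HasDerivAt (fun u : ℝ => Real.sqrt (1 - 2 * l ^ 2 * u))
        (1 / (2 * s) * -(2 * l ^ 2)) t := by
      have hinner : HasDerivAt (fun u : ℝ => 1 - 2 * l ^ 2 * u) (-(2 * l ^ 2)) t := by
        simpa using ((hasDerivAt_id t).const_mul (2 * l ^ 2)).const_sub 1
      exact (Real.hasDerivAt_sqrt (ne_of_gt hpos)).comp t hinner
    have hd' : HasDerivAt (fun u => p u x y z)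
        (1 / (2 * s) * -(2 * l ^ 2) * ψ x y z) t := by
      simp only [hfun]
      exact hd.mul_const _
    have hsne : s ≠ 0 := ne_of_gt hs0
    have hval : (1 - 2 * l ^ 2 * t)⁻¹ * theta A (theta A (p t)) x y z
        = 1 / (2 * s) * -(2 * l ^ 2) * ψ x y z := by
      rw [hp t, hsmul, key]
      rw [show Real.sqrt (1 - 2 * l ^ 2 * t) = s from rfl, ← hss]
      field_simp
    rw [hval]
    exact hd'
end
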